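/- Let s be a prime power. Let A be an n1×m1 matrix over GF(s) that is an OA(n1, m1, s, 1) if m1 = 1 and an OA(n1, m1, s, 2) if m1 > 1, and let B_1,…,B_{n1} each be an OA(n2, m2, s, 2). Then the array E = [D_1, D_2, …, D_{s+1}] of the construction is an OA(n1·n2, (s−1)·m1·m2 + m1 + m2, s, 2). -/

import Mathlib

/-!
Every column of `E` has the form `(i, j) ↦ α i + g * Bᵢ j l`, where `α` is a column of `A`
or `0`, and `g = 0` exactly for the columns of `D_{s+1}`. To count the rows on which two
columns take prescribed values, sum over the blocks `i`. If the two columns read different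
columns `l ≠ l'` of `Bᵢ`, strength 2 of every `Bᵢ` does it. If one of them has `g = 0`, it only
constrains `i`, and balance of the columns of `A` and of `Bᵢ` does it. If both read the same
column `l` with `g, g' ≠ 0`, eliminating `Bᵢ j l` leaves the condition
`g α' i - g' α i = const` on `i`; this function is balanced, because `A` has strength 2 when
the two columns of `A` differ and because `(g - g') • (column of A)` is balanced when they
coincide. If both have `g = 0`, strength 2 of `A` does it.
-/

open Finset

/-- `M` (rows indexed by `R`, columns by `C`, entries in the finite field `F` with
`s = Fintype.card F` elements) is an orthogonal array of strength `t`: for any choice of `t`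
distinct columns and any `t`-tuple of symbols, the number of rows showing that tuple, times
`s ^ t`, equals the number of rows (i.e. each tuple appears exactly `(card R) / s ^ t` times). -/
def IsOA {R C F : Type*} [Fintype R] [Fintype F] [DecidableEq F]
    (M : R → C → F) (t : ℕ) : Prop :=
  ∀ cols : Fin t → C, Function.Injective cols → ∀ v : Fin t → F,
    (Finset.univ.filter fun r : R => ∀ j, M r (cols j) = v j).card
      * Fintype.card F ^ t = Fintype.card R

/-- A vector over `F` is balanced if every symbol of `F` occurs equally often among its
entries. -/
def IsBalanced {R F : Type*} [Fintype R] [Fintype F] [DecidableEq F] (v : R → F) : Prop :=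
  ∀ x : F, (Finset.univ.filter fun r : R => v r = x).card * Fintype.card F = Fintype.card R

/-- `M` is a difference scheme: for any two distinct columns, the vector of entrywise
differences contains every element of `F` equally often. -/
def IsDiffScheme {R C F : Type*} [Fintype R] [Field F] [Fintype F] [DecidableEq F]
    (M : R → C → F) : Prop :=
  ∀ j j' : C, j ≠ j' → ∀ x : F,
    (Finset.univ.filter fun r : R => M r j - M r j' = x).card * Fintype.card F
      = Fintype.card R
/-- The array `E = [D₁, …, D_{s−1}, D_s, D_{s+1}]` of the construction.  Rows are indexed by
pairs `(i, j)` (`j`-th row of the `i`-th block).  The columns of the blocks `D_g`,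
`g = 1, …, s−1`, are indexed by triples `(g, k, l)` where `g` runs over the nonzero elements
of `F` (i.e. `α₁, …, α_{s−1}`); the corresponding entry of `D_g` in row `(i, j)` is
`A i k + α_g • (B i) j l`, i.e. row-wise `aᵢ ⊕ (α_g · Bᵢ)`.  `D_s = B` (the stacked `Bᵢ`'s)
has columns `Sum.inr (Sum.inl l)`, and `D_{s+1} = A ⊕ 0` has columns `Sum.inr (Sum.inr k)`. -/
def OAE {I F : Type} [Field F] {m1 n2 m2 : ℕ}
    (A : I → Fin m1 → F) (B : I → Fin n2 → Fin m2 → F) :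
    (I × Fin n2) → (({g : F // g ≠ 0} × Fin m1 × Fin m2) ⊕ (Fin m2 ⊕ Fin m1)) → F
  | p, Sum.inl (g, k, l) => A p.1 k + g.1 * B p.1 p.2 l
  | p, Sum.inr (Sum.inl l) => B p.1 p.2 l
  | p, Sum.inr (Sum.inr k) => A p.1 k

section OrthogonalArray

variable {R C F : Type*} [Fintype R] [Fintype F] [DecidableEq F] {M : R → C → F}

theorem isOA_of_card_lt {t : ℕ} [Fintype C] (h : Fintype.card C < t) : IsOA M t :=
  fun cols hcols => absurd (Fintype.card_le_of_injective cols hcols) (by simpa using h)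

theorem isOA_two_iff : IsOA M 2 ↔ ∀ c c', c ≠ c' → ∀ x y,
    #{r | M r c = x ∧ M r c' = y} * Fintype.card F ^ 2 = Fintype.card R := by
  constructor
  · intro h c c' hc x y
    have hinj : Function.Injective ![c, c'] := by
      intro a b hab
      fin_cases a <;> fin_cases b <;> simp_all [eq_comm]
    simpa [Fin.forall_fin_two] using h ![c, c'] hinj ![x, y]
  · intro h cols hcols v
    simpa [Fin.forall_fin_two] using
      h (cols 0) (cols 1) (hcols.ne (by decide)) (v 0) (v 1)

theorem IsOA.isBalanced_of_one (h : IsOA M 1) (c : C) : IsBalanced (M · c) := fun x => by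
  simpa [Fin.forall_fin_one] using h ![c] (Function.injective_of_subsingleton _) ![x]

/-- Each of the `s` values `y` of column `c'` contributes the `1/s²` of the rows showing the pair
`(f y, y)`. -/
theorem IsOA.card_filter_eq_comp [Nonempty F] (h : IsOA M 2) {c c' : C} (hc : c ≠ c')
    (f : F → F) :
    #{r | M r c = f (M r c')} * Fintype.card F = Fintype.card R := by
  have hfiber : #{r | M r c = f (M r c')} = ∑ y, #{r | M r c = f y ∧ M r c' = y} := by
    rw [card_eq_sum_card_fiberwise (f := (M · c')) (t := univ) fun _ _ => mem_coe.2 (mem_univ _)]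
    refine sum_congr rfl fun y _ => ?_
    rw [filter_filter]
    exact congrArg card (filter_congr fun r _ => by
      constructor <;> rintro ⟨h, rfl⟩ <;> exact ⟨h, rfl⟩)
  apply Nat.eq_of_mul_eq_mul_right (Fintype.card_pos (α := F))
  rw [hfiber, mul_assoc, ← sq, sum_mul, sum_congr rfl fun y _ => isOA_two_iff.1 h c c' hc _ y]
  simp [mul_comm]

theorem IsOA.isBalanced_of_one_lt_card [Nonempty F] [Fintype C] (h : IsOA M 2)
    (hC : 1 < Fintype.card C) (c : C) : IsBalanced (M · c) := by
  obtain ⟨c', hc'⟩ := Fintype.exists_ne_of_one_lt_card hC c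
  exact fun x => h.card_filter_eq_comp hc'.symm fun _ => x

end OrthogonalArray

theorem add_mul_eq_iff_eq_inv_mul {F : Type*} [Field F] {a b g x : F} (hg : g ≠ 0) :
    a + g * b = x ↔ b = g⁻¹ * (x - a) := by
  rw [eq_inv_mul_iff_mul_eq₀ hg, eq_sub_iff_add_eq']

section Field

variable {R C F : Type*} [Fintype R] [Field F] [Fintype F] [DecidableEq F]

theorem IsBalanced.const_mul {v : R → F} (hv : IsBalanced v) {a : F} (ha : a ≠ 0) :
    IsBalanced fun r => a * v r := fun x => by
  simpa [← eq_inv_mul_iff_mul_eq₀ ha] using hv (a⁻¹ * x)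

theorem IsOA.isBalanced_mul_sub {M : R → C → F} (h : IsOA M 2) {c c' : C} (hc : c ≠ c')
    {a : F} (ha : a ≠ 0) (f : F → F) : IsBalanced fun r => a * M r c - f (M r c') := fun x => by
  simpa [sub_eq_iff_eq_add, ← eq_inv_mul_iff_mul_eq₀ ha] using
    h.card_filter_eq_comp hc fun y => a⁻¹ * (x + f y)

end Field

theorem card_filter_prod_mul_pow {I J : Type*} [Fintype I] [Fintype J] {s a b : ℕ}
    (P : I → Prop) [DecidablePred P] (Q : I → J → Prop) [∀ i, DecidablePred (Q i)]
    (hP : #{i | P i} * s ^ a = Fintype.card I)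
    (hQ : ∀ i, P i → #{j | Q i j} * s ^ b = Fintype.card J) :
    #{p : I × J | P p.1 ∧ Q p.1 p.2} * s ^ (a + b) = Fintype.card I * Fintype.card J := by
  have hsplit : #{p : I × J | P p.1 ∧ Q p.1 p.2} = ∑ i ∈ {i | P i}, #{j | Q i j} := by
    rw [card_filter, Fintype.sum_prod_type, sum_filter]
    refine sum_congr rfl fun i _ => ?_
    by_cases h : P i <;> simp [h]
  calc #{p : I × J | P p.1 ∧ Q p.1 p.2} * s ^ (a + b)
      = (∑ i ∈ {i | P i}, #{j | Q i j} * s ^ b) * s ^ a := by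
        simp only [hsplit, sum_mul]
        exact sum_congr rfl fun _ _ => by ring
    _ = #{i | P i} * s ^ a * Fintype.card J := by
        rw [sum_congr rfl fun i hi => hQ i (mem_filter.1 hi).2, sum_const, smul_eq_mul]
        ring
    _ = Fintype.card I * Fintype.card J := by rw [hP]

theorem card_filter_block_block {I J F : Type*} [Fintype I] [Fintype J] [Fintype F]
    [DecidableEq F] {α α' : I → F} {x y : F}
    (hα : #{i | α i = x ∧ α' i = y} * Fintype.card F ^ 2 = Fintype.card I) :
    #{p : I × J | α p.1 = x ∧ α' p.1 = y} * Fintype.card F ^ 2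
      = Fintype.card I * Fintype.card J := by
  simpa using card_filter_prod_mul_pow (a := 2) (b := 0) (fun i => α i = x ∧ α' i = y)
      (fun _ _ => True) hα (by simp)

section AffineColumns

variable {I J L F : Type*} [Fintype I] [Fintype J] [Field F] [Fintype F] [DecidableEq F]
  {B : I → J → L → F} {u u' : I × J → F} {α α' : I → F} {g g' : F} {l l' : L}

theorem card_filter_affine_affine_of_ne (hu : ∀ p, u p = α p.1 + g * B p.1 p.2 l)
    (hu' : ∀ p, u' p = α' p.1 + g' * B p.1 p.2 l') (hB : ∀ i, IsOA (B i) 2) (hl : l ≠ l')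
    (hg : g ≠ 0) (hg' : g' ≠ 0) (x y : F) :
    #{p : I × J | u p = x ∧ u' p = y} * Fintype.card F ^ 2
      = Fintype.card I * Fintype.card J := by
  simp only [hu, hu']
  simpa [add_mul_eq_iff_eq_inv_mul hg, add_mul_eq_iff_eq_inv_mul hg'] using
    card_filter_prod_mul_pow (a := 0) (fun _ => True)
      (fun i j => B i j l = g⁻¹ * (x - α i) ∧ B i j l' = g'⁻¹ * (y - α' i)) (by simp)
      fun i _ => isOA_two_iff.1 (hB i) l l' hl _ _

theorem card_filter_affine_block (hu : ∀ p, u p = α p.1 + g * B p.1 p.2 l)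
    (hB : ∀ i, IsBalanced (B i · l)) (hα' : IsBalanced α') (hg : g ≠ 0) (x y : F) :
    #{p : I × J | u p = x ∧ α' p.1 = y} * Fintype.card F ^ 2
      = Fintype.card I * Fintype.card J := by
  simp only [hu]
  simpa [add_mul_eq_iff_eq_inv_mul hg, and_comm] using
    card_filter_prod_mul_pow (a := 1) (b := 1) (fun i => α' i = y)
      (fun i j => B i j l = g⁻¹ * (x - α i)) (by simpa using hα' y)
      fun i _ => by simpa using hB i _

theorem card_filter_affine_affine_same (hu : ∀ p, u p = α p.1 + g * B p.1 p.2 l)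
    (hu' : ∀ p, u' p = α' p.1 + g' * B p.1 p.2 l) (hB : ∀ i, IsBalanced (B i · l))
    (hα : IsBalanced fun i => g * α' i - g' * α i) (hg : g ≠ 0) (x y : F) :
    #{p : I × J | u p = x ∧ u' p = y} * Fintype.card F ^ 2
      = Fintype.card I * Fintype.card J := by
  have elim : ∀ a a' b : F, (a + g * b = x ∧ a' + g' * b = y) ↔
      (g * a' - g' * a = g * y - g' * x ∧ b = g⁻¹ * (x - a)) := by
    intro a a' b
    rw [← add_mul_eq_iff_eq_inv_mul hg]
    constructor
    · rintro ⟨h1, h2⟩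
      exact ⟨by linear_combination g * h2 - g' * h1, h1⟩
    · rintro ⟨h1, h2⟩
      exact ⟨h2, mul_left_cancel₀ hg (by linear_combination h1 + g' * h2)⟩
  simp only [hu, hu', elim]
  exact
    card_filter_prod_mul_pow (a := 1) (b := 1) (fun i => g * α' i - g' * α i = g * y - g' * x)
      (fun i j => B i j l = g⁻¹ * (x - α i)) (by simpa using hα _)
      fun i _ => by simpa using hB i _

end AffineColumns

theorem card_filter_and_comm {R : Type*} [Fintype R] (P Q : R → Prop) [DecidablePred P]
    [DecidablePred Q] : #{r | P r ∧ Q r} = #{r | Q r ∧ P r} := by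
  simp only [and_comm]

section OAE

variable {I F : Type} [Fintype I] [Field F] [Fintype F] [DecidableEq F] {m1 n2 m2 : ℕ}
  {A : I → Fin m1 → F} {B : I → Fin n2 → Fin m2 → F}

theorem card_filter_OAE_inl_inl (hA : IsOA A 2) (hA1 : ∀ k, IsBalanced (A · k))
    (hB : ∀ i, IsOA (B i) 2) (hB1 : ∀ i l, IsBalanced (B i · l))
    {g g' : {g : F // g ≠ 0}} {k k' : Fin m1} {l l' : Fin m2} (hne : (g, k, l) ≠ (g', k', l'))
    (x y : F) :
    #{p | OAE A B p (.inl (g, k, l)) = x ∧ OAE A B p (.inl (g', k', l')) = y}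
      * Fintype.card F ^ 2 = Fintype.card I * Fintype.card (Fin n2) := by
  rcases eq_or_ne l l' with rfl | hl
  · refine card_filter_affine_affine_same (α := (A · k)) (α' := (A · k')) (fun _ => rfl)
      (fun _ => rfl) (hB1 · l) ?_ g.2 x y
    rcases eq_or_ne k k' with rfl | hk
    · have hg : g.1 - g'.1 ≠ 0 := sub_ne_zero.2 fun h => hne (by rw [Subtype.ext h])
      simpa [← sub_mul] using (hA1 k).const_mul hg
    · exact hA.isBalanced_mul_sub hk.symm g.2 (g'.1 * ·)
  · exact card_filter_affine_affine_of_ne (α := (A · k)) (α' := (A · k')) (fun _ => rfl)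
      (fun _ => rfl) hB hl g.2 g'.2 x y

theorem card_filter_OAE_inl_inr_inl (hA1 : ∀ k, IsBalanced (A · k)) (hB : ∀ i, IsOA (B i) 2)
    (hB1 : ∀ i l, IsBalanced (B i · l)) (g : {g : F // g ≠ 0}) (k : Fin m1) (l l' : Fin m2)
    (x y : F) :
    #{p | OAE A B p (.inl (g, k, l)) = x ∧ OAE A B p (.inr (.inl l')) = y}
      * Fintype.card F ^ 2 = Fintype.card I * Fintype.card (Fin n2) := by
  have hu' : ∀ p, OAE A B p (.inr (.inl l')) = 0 + 1 * B p.1 p.2 l' := fun _ => by simp [OAE]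
  rcases eq_or_ne l l' with rfl | hl
  · refine card_filter_affine_affine_same (α := (A · k)) (α' := 0) (fun _ => rfl) hu' (hB1 · l) ?_
      g.2 x y
    simpa using (hA1 k).const_mul (neg_ne_zero.2 one_ne_zero)
  · exact card_filter_affine_affine_of_ne (α := (A · k)) (α' := 0) (fun _ => rfl) hu' hB hl g.2
      one_ne_zero x y

theorem isOA_OAE (hA : IsOA A 2) (hA1 : ∀ k, IsBalanced (A · k)) (hB : ∀ i, IsOA (B i) 2)
    (hB1 : ∀ i l, IsBalanced (B i · l)) : IsOA (OAE A B) 2 := by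
  have hD : ∀ l p, OAE A B p (.inr (.inl l)) = 0 + 1 * B p.1 p.2 l := fun _ _ => by simp [OAE]
  refine isOA_two_iff.2 fun c c' hne x y => ?_
  rw [Fintype.card_prod]
  obtain ⟨g, k, l⟩ | l | k := c <;> obtain ⟨g', k', l'⟩ | l' | k' := c'
  · exact card_filter_OAE_inl_inl hA hA1 hB hB1 (by simpa using hne) x y
  · exact card_filter_OAE_inl_inr_inl hA1 hB hB1 g k l l' x y
  · exact card_filter_affine_block (α := (A · k)) (fun _ => rfl) (hB1 · l) (hA1 k') g.2 x y
  · rw [card_filter_and_comm]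
    exact card_filter_OAE_inl_inr_inl hA1 hB hB1 g' k' l' l y x
  · exact card_filter_affine_affine_of_ne (α := 0) (α' := 0) (hD l) (hD l') hB (by simpa using hne)
      one_ne_zero one_ne_zero x y
  · exact card_filter_affine_block (α := 0) (hD l) (hB1 · l) (hA1 k') one_ne_zero x y
  · rw [card_filter_and_comm]
    exact card_filter_affine_block (α := (A · k')) (fun _ => rfl) (hB1 · l') (hA1 k) g'.2 y x
  · rw [card_filter_and_comm]
    exact card_filter_affine_block (α := 0) (hD l') (hB1 · l') (hA1 k) one_ne_zero y x
  · exact card_filter_block_block (isOA_two_iff.1 hA k k' (by simpa using hne) x y)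

end OAE

theorem statement7_general {F : Type} [Field F] [Fintype F] [DecidableEq F]
    {n1 m1 n2 m2 : ℕ} (hm2 : 2 ≤ m2)
    (A : Fin n1 → Fin m1 → F) (B : Fin n1 → Fin n2 → Fin m2 → F)
    (hA1 : m1 = 1 → IsOA A 1) (hA2 : 1 < m1 → IsOA A 2)
    (hB : ∀ i, IsOA (B i) 2) :
    IsOA (OAE A B) 2 ∧
      Fintype.card (({g : F // g ≠ 0} × Fin m1 × Fin m2) ⊕ (Fin m2 ⊕ Fin m1))
        = (Fintype.card F - 1) * m1 * m2 + m1 + m2 := by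
  have hA : IsOA A 2 := by
    rcases lt_or_ge 1 m1 with h | h
    · exact hA2 h
    · exact isOA_of_card_lt (by rw [Fintype.card_fin]; omega)
  have hA1' : ∀ k, IsBalanced (A · k) := by
    intro k
    rcases eq_or_ne m1 1 with h | h
    · exact (hA1 h).isBalanced_of_one k
    · exact hA.isBalanced_of_one_lt_card (by rw [Fintype.card_fin]; have := k.pos; omega) k
  have hB1 : ∀ i l, IsBalanced (B i · l) := fun i =>
    (hB i).isBalanced_of_one_lt_card (by rw [Fintype.card_fin]; exact hm2)
  refine ⟨isOA_OAE hA hA1' hB hB1, ?_⟩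
  simp only [ne_eq, Fintype.card_sum, Fintype.card_prod, Fintype.card_subtype_compl,
    Fintype.card_unique, Fintype.card_fin]
  ring

/-- Theorem 1: if `A` is an `OA(n₁, m₁, s, 1)` for `m₁ = 1` (resp. an
`OA(n₁, m₁, s, 2)` for `m₁ > 1`) and each `Bᵢ` is an `OA(n₂, m₂, s, 2)`, then `E` is an
`OA(n₁n₂, (s−1)m₁m₂ + m₁ + m₂, s, 2)`; the number of columns of `E` is recorded by the
cardinality identity. -/
theorem statement7 {F : Type} [Field F] [Fintype F] [DecidableEq F]
    {n1 m1 n2 m2 : ℕ} (hm1 : 0 < m1) (hm2 : 2 ≤ m2)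
    (A : Fin n1 → Fin m1 → F) (B : Fin n1 → Fin n2 → Fin m2 → F)
    (hA1 : m1 = 1 → IsOA A 1) (hA2 : 1 < m1 → IsOA A 2)
    (hB : ∀ i, IsOA (B i) 2) :
    IsOA (OAE A B) 2 ∧
      Fintype.card (({g : F // g ≠ 0} × Fin m1 × Fin m2) ⊕ (Fin m2 ⊕ Fin m1))
        = (Fintype.card F - 1) * m1 * m2 + m1 + m2 :=
  statement7_general hm2 A B hA1 hA2 hB
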